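/- Let q be a power of a prime p, C ≥ 1, and α > 0 sufficiently small. Suppose F_1, …, F_n ⊆ [n] satisfy |F_i| < αn and every index i ∈ [n] is contained in at most (1 − 12α)n of the sets F_j. Let X_1, …, X_m be independent random vectors in F_q^n, where X_i is a near uniform vector of type F_i with constant C, and m ≥ (1 − 6α)n. Then there exist constants C' > 0 and c > 0 such that with probability at least 1 − (C'/q)^{cn} with respect to X_1, …, X_m, every nonzero vector a = (a_1, …, a_n) ∈ F_q^n orthogonal to all of X_1, …, X_m satisfies ρ_{F_{m+1}}(a) ≤ (C'/q)^{cn}. -/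

import Mathlib

/-!
A nonzero `a` is orthogonal to a near uniform column `X_j` with probability at most `C/q` as soon
as some `i ∉ F_j` has `a_i ≠ 0`: conditionally on the other entries, `a ⬝ X_j = 0` pins `x_{ij}` to
one value. The columns being independent, these bounds multiply. If `a` has at most `αn` nonzero
entries, a fixed nonzero coordinate lies outside at least `6αn` of the `F_j`, and there are at most
`2^n q^{αn}` such `a`. Otherwise `a` escapes every `F_j`, which gives probability `(C/q)^m`; and
Parseval gives `∑_a ρ(a) ≤ (Cq)^{n/2} q^{αn}`, so by Markov few such `a` have `ρ(a) > ε`. A union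
bound over both classes with `ε = (4C)^n q^{-αn}` gives failure probability at most `ε`.
-/

open MeasureTheory ProbabilityTheory Matrix Finset

/-- `e_p(x) = exp(2πi x/p)` for `x ∈ F_p = ZMod p`. -/
noncomputable def ep (p : ℕ) (x : ZMod p) : ℂ :=
  Complex.exp (2 * Real.pi * Complex.I * ((x.val : ℂ) / p))

section TraceCharacter

variable (p : ℕ) [Fact p.Prime] (F : Type*) [Field F] [Fintype F] [Algebra (ZMod p) F]

lemma ep_eq_stdAddChar (x : ZMod p) : ep p x = ZMod.stdAddChar x := by
  rw [ZMod.stdAddChar_apply, ZMod.toCircle_apply, ep, mul_div_assoc]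

noncomputable def traceChar : AddChar F ℂ where
  toFun x := ep p (Algebra.trace (ZMod p) F x)
  map_zero_eq_one' := by simp [ep_eq_stdAddChar]
  map_add_eq_mul' x y := by simp [ep_eq_stdAddChar, AddChar.map_add_eq_mul]

lemma isPrimitive_traceChar : (traceChar p F).IsPrimitive := by
  refine AddChar.IsPrimitive.of_ne_one fun h => ?_
  obtain ⟨x, hx⟩ : ∃ x : F, Algebra.trace (ZMod p) F x ≠ 0 := by
    by_contra! h0
    exact one_ne_zero ((traceForm_nondegenerate (ZMod p) F).1 1 fun x => by simpa using h0 x)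
  refine hx (ZMod.injective_stdAddChar ?_)
  simpa [traceChar, ep_eq_stdAddChar] using DFunLike.congr_fun h x

end TraceCharacter

section FourierNorm

variable {R : Type*} [CommRing R] [Fintype R]

/-- For a random `x` with law `w`, this is `|E ψ(x t)|`: the paper's `f_i(t)` for `ψ = e_p ∘ tr`. -/
noncomputable def fourierNorm (ψ : AddChar R ℂ) (w : R → ℝ) (t : R) : ℝ :=
  ‖∑ k, (w k : ℂ) * ψ (k * t)‖

lemma fourierNorm_nonneg (ψ : AddChar R ℂ) (w : R → ℝ) (t : R) : 0 ≤ fourierNorm ψ w t :=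
  norm_nonneg _

variable [DecidableEq R]

lemma sum_fourierNorm_sq {ψ : AddChar R ℂ} (hψ : ψ.IsPrimitive) (w : R → ℝ) :
    ∑ t, fourierNorm ψ w t ^ 2 = Fintype.card R * ∑ k, w k ^ 2 := by
  have hsq (t : R) : (fourierNorm ψ w t ^ 2 : ℂ) =
      ∑ k, ∑ k', (w k * w k' : ℂ) * ψ (t * (k - k')) := by
    rw [fourierNorm, ← Complex.mul_conj', map_sum, Finset.sum_mul_sum]
    refine Finset.sum_congr rfl fun k _ => Finset.sum_congr rfl fun k' _ => ?_
    rw [map_mul (starRingEnd ℂ), Complex.conj_ofReal, ← AddChar.map_neg_eq_conj, mul_sub,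
      sub_eq_add_neg, AddChar.map_add_eq_mul, mul_comm t k, mul_comm t k', ← neg_mul]
    ring
  have horth (k k' : R) : ∑ t, ψ (t * (k - k')) = if k = k' then (Fintype.card R : ℂ) else 0 := by
    simp [AddChar.sum_mulShift _ hψ, sub_eq_zero]
  apply Complex.ofReal_injective
  push_cast
  calc ∑ t, (fourierNorm ψ w t : ℂ) ^ 2
      = ∑ k, ∑ k', (w k * w k' : ℂ) * ∑ t, ψ (t * (k - k')) := by
        simp_rw [hsq, Finset.mul_sum]
        rw [Finset.sum_comm]
        exact Finset.sum_congr rfl fun k _ => Finset.sum_comm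
    _ = Fintype.card R * ∑ k, (w k : ℂ) ^ 2 := by
        simp [horth, Finset.mul_sum, sq, mul_comm]

lemma sum_fourierNorm_le {ψ : AddChar R ℂ} (hψ : ψ.IsPrimitive) {w : R → ℝ} {C : ℝ}
    (hw_nonneg : ∀ k, 0 ≤ w k) (hw_sum : ∑ k, w k = 1) (hw_le : ∀ k, w k ≤ C / Fintype.card R) :
    ∑ t, fourierNorm ψ w t ≤ √(C * Fintype.card R) := by
  have hw_sq : ∑ k, w k ^ 2 ≤ C / Fintype.card R :=
    calc ∑ k, w k ^ 2 ≤ ∑ k, C / Fintype.card R * w k :=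
          Finset.sum_le_sum fun k _ => by
            rw [sq]; exact mul_le_mul_of_nonneg_right (hw_le k) (hw_nonneg k)
      _ = C / Fintype.card R := by rw [← Finset.mul_sum, hw_sum, mul_one]
  refine (le_abs_self _).trans (Real.abs_le_sqrt ?_)
  calc (∑ t, fourierNorm ψ w t) ^ 2 ≤ Fintype.card R * ∑ t, fourierNorm ψ w t ^ 2 := by
        simpa using sq_sum_le_card_mul_sum_sq (s := Finset.univ) (f := fourierNorm ψ w)
    _ = Fintype.card R * (Fintype.card R * ∑ k, w k ^ 2) := by rw [sum_fourierNorm_sq hψ]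
    _ ≤ Fintype.card R * (Fintype.card R * (C / Fintype.card R)) := by gcongr
    _ = C * Fintype.card R := by field_simp

end FourierNorm

lemma Fintype.sum_prod_eq_prod_sum_mul_card_pow {ι α : Type*} [Fintype ι] [DecidableEq ι]
    [Fintype α] (s : Finset ι) (g : ι → α → ℝ) :
    ∑ a : ι → α, ∏ i ∈ s, g i (a i) = (∏ i ∈ s, ∑ b, g i b) * Fintype.card α ^ #sᶜ := by
  have h (a : ι → α) : ∏ i ∈ s, g i (a i) = ∏ i, if i ∈ s then g i (a i) else 1 := by
    rw [Finset.prod_ite_mem, Finset.univ_inter]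
  rw [Fintype.sum_congr _ _ h, ← Fintype.prod_sum (fun i b => if i ∈ s then g i b else 1),
    ← Finset.prod_mul_prod_compl s]
  congr 1
  · exact Finset.prod_congr rfl fun i hi => by simp [hi]
  · rw [← Finset.prod_const]
    exact Finset.prod_congr rfl fun i hi => by simp [Finset.mem_compl.mp hi]

lemma Fintype.card_filter_card_support_le {ι α : Type*} [Fintype ι] [DecidableEq ι] [Fintype α]
    [DecidableEq α] [Zero α] (k : ℕ) :
    #{a : ι → α | #{i | a i ≠ 0} ≤ k} ≤ 2 ^ Fintype.card ι * Fintype.card α ^ k := by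
  set small : Finset (Finset ι) := {S | #S ≤ k}
  set vanishOff : Finset ι → Finset (ι → α) :=
    fun S => Fintype.piFinset fun i => if i ∈ S then univ else {0}
  have hcover : ({a : ι → α | #{i | a i ≠ 0} ≤ k} : Finset _) ⊆ small.biUnion vanishOff := by
    intro a ha
    refine Finset.mem_biUnion.mpr ⟨({i | a i ≠ 0} : Finset ι), by simpa [small] using ha, ?_⟩
    refine Fintype.mem_piFinset.mpr fun i => ?_
    by_cases hi : a i = 0 <;> simp [hi]
  have hcard (S : Finset ι) (hS : S ∈ small) : #(vanishOff S) ≤ Fintype.card α ^ k := by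
    simp_rw [vanishOff, Fintype.card_piFinset, apply_ite Finset.card, Finset.card_univ,
      Finset.card_singleton]
    rw [Finset.prod_ite_mem, Finset.univ_inter, Finset.prod_const]
    exact Nat.pow_le_pow_right Fintype.card_pos (Finset.mem_filter.mp hS).2
  calc #{a : ι → α | #{i | a i ≠ 0} ≤ k}
      ≤ ∑ S ∈ small, #(vanishOff S) := (Finset.card_le_card hcover).trans Finset.card_biUnion_le
    _ ≤ ∑ _S ∈ small, Fintype.card α ^ k := Finset.sum_le_sum hcard
    _ ≤ 2 ^ Fintype.card ι * Fintype.card α ^ k := by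
        rw [Finset.sum_const, smul_eq_mul]
        gcongr
        exact (Finset.card_filter_le _ _).trans_eq (by simp)

lemma Function.Injective.card_le_card_filter_not_add {κ κ' : Type*} [Fintype κ] [Fintype κ']
    {e : κ → κ'} (he : Function.Injective e) (P : κ' → Prop) [DecidablePred P] :
    Fintype.card κ ≤ #{j | ¬ P (e j)} + #{j' | P j'} := by
  have hP : #{j | P (e j)} ≤ #{j' | P j'} :=
    Finset.card_le_card_of_injOn e (fun j hj => by simpa using hj) he.injOn
  have := Finset.card_filter_add_card_filter_not (s := univ) (fun j => P (e j))
  rw [Finset.card_univ] at this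
  omega

section Rho
variable {ι F : Type*} [Fintype ι] [DecidableEq ι] [Field F] [Fintype F] [DecidableEq F]

noncomputable def rho (ψ : AddChar F ℂ) (w : ι → F → ℝ) (S : Finset ι) (a : ι → F) : ℝ :=
  (Fintype.card F : ℝ)⁻¹ * ∑ t ∈ univ.erase 0, ∏ i ∈ univ \ S, fourierNorm ψ (w i) (t * a i)

lemma rho_nonneg (ψ : AddChar F ℂ) (w : ι → F → ℝ) (S : Finset ι) (a : ι → F) :
    0 ≤ rho ψ w S a :=
  mul_nonneg (by positivity) <|
    Finset.sum_nonneg fun _ _ => Finset.prod_nonneg fun _ _ => fourierNorm_nonneg _ _ _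

lemma sum_rho_le {ψ : AddChar F ℂ} (hψ : ψ.IsPrimitive) {w : ι → F → ℝ} {S : Finset ι} {C : ℝ}
    (hw_nonneg : ∀ i ∉ S, ∀ k, 0 ≤ w i k) (hw_sum : ∀ i ∉ S, ∑ k, w i k = 1)
    (hw_le : ∀ i ∉ S, ∀ k, w i k ≤ C / Fintype.card F) :
    ∑ a, rho ψ w S a ≤ √(C * Fintype.card F) ^ #Sᶜ * Fintype.card F ^ #S := by
  set M := √(C * Fintype.card F) ^ #Sᶜ * (Fintype.card F : ℝ) ^ #S
  have hslice (t : F) (ht : t ∈ univ.erase 0) :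
      ∑ a : ι → F, ∏ i ∈ univ \ S, fourierNorm ψ (w i) (t * a i) ≤ M := by
    have ht0 : t ≠ 0 := Finset.ne_of_mem_erase ht
    rw [Fintype.sum_prod_eq_prod_sum_mul_card_pow _ fun i b => fourierNorm ψ (w i) (t * b),
      ← Finset.compl_eq_univ_sdiff, compl_compl]
    calc (∏ i ∈ Sᶜ, ∑ b, fourierNorm ψ (w i) (t * b)) * (Fintype.card F : ℝ) ^ #S
        ≤ (∏ _i ∈ Sᶜ, √(C * Fintype.card F)) * (Fintype.card F : ℝ) ^ #S := by
          gcongr with i hi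
          · exact fun i _ => Finset.sum_nonneg fun b _ => fourierNorm_nonneg _ _ _
          · have hiS : i ∉ S := Finset.mem_compl.mp hi
            calc ∑ b, fourierNorm ψ (w i) (t * b) = ∑ b, fourierNorm ψ (w i) b :=
                  Equiv.sum_comp (Equiv.mulLeft₀ t ht0) _
              _ ≤ _ := sum_fourierNorm_le hψ (hw_nonneg i hiS) (hw_sum i hiS) (hw_le i hiS)
      _ = M := by rw [Finset.prod_const]
  calc ∑ a, rho ψ w S a
      = (Fintype.card F : ℝ)⁻¹ * ∑ t ∈ univ.erase 0,
          ∑ a : ι → F, ∏ i ∈ univ \ S, fourierNorm ψ (w i) (t * a i) := by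
        simp only [rho, ← Finset.mul_sum]
        rw [Finset.sum_comm]
    _ ≤ (Fintype.card F : ℝ)⁻¹ * (Fintype.card F * M) := by
        gcongr
        refine (Finset.sum_le_sum hslice).trans ?_
        rw [Finset.sum_const, nsmul_eq_mul]
        gcongr
        exact_mod_cast (Finset.card_le_card (Finset.erase_subset _ _)).trans_eq Finset.card_univ
    _ = M := by field_simp

end Rho

namespace ProbabilityTheory

variable {Ω : Type*} [MeasurableSpace Ω] {μ : Measure Ω}

lemma iIndepFun.curry {ι κ β : Type*} [Fintype ι] [Fintype κ] [MeasurableSpace β]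
    [MeasurableSingletonClass β] [Countable β] {f : ι × κ → Ω → β} (hf : ∀ q, Measurable (f q))
    (h : iIndepFun f μ) : iIndepFun (fun j ω i => f (i, j) ω) μ := by
  have := h.isProbabilityMeasure
  have hcol (j : κ) : Measurable fun ω i => f (i, j) ω := measurable_pi_lambda _ fun i => hf (i, j)
  rw [iIndepFun_iff_map_fun_eq_pi_map fun j => (hcol j).aemeasurable]
  refine Measure.ext_of_singleton fun v => ?_
  have hall : (fun ω j i => f (i, j) ω) ⁻¹' {v} =
      ⋂ q ∈ (univ : Finset (ι × κ)), f q ⁻¹' {v q.2 q.1} := by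
    ext ω
    simp [funext_iff, forall_comm (α := ι)]
  have hcolumn (j : κ) :
      (fun ω i => f (i, j) ω) ⁻¹' {v j} = ⋂ i ∈ (univ : Finset ι), f (i, j) ⁻¹' {v j i} := by
    ext ω
    simp [funext_iff]
  rw [Measure.map_apply (measurable_pi_lambda _ hcol) (measurableSet_singleton _), hall,
    h.measure_inter_preimage_eq_mul _ fun _ _ => measurableSet_singleton _, Measure.pi_singleton,
    Fintype.prod_prod_type_right]
  refine Finset.prod_congr rfl fun j _ => ?_
  rw [Measure.map_apply (hcol j) (measurableSet_singleton _), hcolumn,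
    (h.precomp (Prod.mk_left_injective j)).measure_inter_preimage_eq_mul _
      fun _ _ => measurableSet_singleton _]

variable [IsProbabilityMeasure μ]

lemma sum_measureReal_setOf_eq_eq_one {β : Type*} [Fintype β] [MeasurableSpace β]
    [MeasurableSingletonClass β] {Y : Ω → β} (hY : Measurable Y) :
    ∑ k, μ.real {ω | Y ω = k} = 1 := by
  change ∑ k, μ.real (Y ⁻¹' {k}) = 1
  rw [sum_measureReal_preimage_singleton _ fun k _ => hY (measurableSet_singleton k)]
  simp

lemma one_sub_measureReal_le_measureReal_compl (s : Set Ω) : 1 - μ.real s ≤ μ.real sᶜ := by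
  have := measureReal_union_le (μ := μ) s sᶜ
  rw [Set.union_compl_self, probReal_univ] at this
  linarith


lemma IndepFun.measureReal_setOf_eq_le {β : Type*} [MeasurableSpace β] [Fintype β]
    [MeasurableSingletonClass β] {X Y : Ω → β} (hXY : IndepFun X Y μ) (hY : Measurable Y) {B : ℝ}
    (hX : ∀ k, μ.real {ω | X ω = k} ≤ B) : μ.real {ω | X ω = Y ω} ≤ B := by
  have hdiag : {ω | X ω = Y ω} = ⋃ k ∈ (univ : Finset β), X ⁻¹' {k} ∩ Y ⁻¹' {k} := by
    ext ω
    simp [eq_comm]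
  calc μ.real {ω | X ω = Y ω} ≤ ∑ k, μ.real (X ⁻¹' {k} ∩ Y ⁻¹' {k}) := by
        rw [hdiag]
        exact measureReal_biUnion_finset_le _ _
    _ = ∑ k, μ.real {ω | X ω = k} * μ.real (Y ⁻¹' {k}) := by
        refine Finset.sum_congr rfl fun k _ => ?_
        rw [measureReal_def, hXY.measure_inter_preimage_eq_mul _ _ (measurableSet_singleton k)
          (measurableSet_singleton k), ENNReal.toReal_mul]
        rfl
    _ ≤ ∑ k, B * μ.real (Y ⁻¹' {k}) := by gcongr with k; exact hX k
    _ = B := by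
        rw [← Finset.mul_sum, sum_measureReal_preimage_singleton _
          fun k _ => hY (measurableSet_singleton k)]
        simp

lemma measureReal_dotProduct_eq_zero_le {ι F : Type*} [Fintype ι] [DecidableEq ι] [Field F]
    [Fintype F] [MeasurableSpace F] [MeasurableSingletonClass F] {X : ι → Ω → F}
    (hX : iIndepFun X μ) (hmeas : ∀ i, Measurable (X i)) {a : ι → F} {i₀ : ι} (ha : a i₀ ≠ 0)
    {B : ℝ} (hB : ∀ k, μ.real {ω | X i₀ ω = k} ≤ B) :
    μ.real {ω | a ⬝ᵥ (fun i => X i ω) = 0} ≤ B := by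
  -- Solved for `x i₀`, the equation `a ⬝ᵥ x = 0` says that `X i₀` equals a function of the other,
  -- independent, entries.
  set rest : Finset ι := univ.erase i₀
  have hindep := (hX.indepFun_finset {i₀} rest (by simp [rest]) hmeas).comp
    (φ := fun x => x ⟨i₀, Finset.mem_singleton_self i₀⟩)
    (ψ := fun y => -(a i₀)⁻¹ * ∑ i : rest, a i * y i) (.of_discrete) (.of_discrete)
  have hevent : {ω | a ⬝ᵥ (fun i => X i ω) = 0} =
      {ω | X i₀ ω = -(a i₀)⁻¹ * ∑ i : rest, a i * X i ω} := by
    ext ω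
    rw [Set.mem_ofPred_eq, Set.mem_ofPred_eq, dotProduct, ← Finset.add_sum_erase _ _ (mem_univ i₀),
      Finset.sum_coe_sort rest fun i => a i * X i ω]
    constructor <;> intro h
    · field_simp
      linear_combination h
    · rw [h]
      field_simp
      ring
  rw [hevent]
  exact hindep.measureReal_setOf_eq_le
    (Measurable.of_discrete.comp (measurable_pi_lambda _ fun i => hmeas i)) hB

section Orthogonal

variable {κ ι F : Type*} [Fintype ι] [Field F] [Fintype F] [MeasurableSpace F]
  [MeasurableSingletonClass F]

lemma measureReal_forall_dotProduct_eq_zero_le {Y : κ → Ω → ι → F} (hY : iIndepFun Y μ)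
    (a : ι → F) (G : Finset κ) {B : ℝ} (hB : ∀ j ∈ G, μ.real {ω | a ⬝ᵥ Y j ω = 0} ≤ B) :
    μ.real {ω | ∀ j, a ⬝ᵥ Y j ω = 0} ≤ B ^ #G := by
  calc μ.real {ω | ∀ j, a ⬝ᵥ Y j ω = 0}
      ≤ μ.real (⋂ j ∈ G, Y j ⁻¹' {v | a ⬝ᵥ v = 0}) :=
        measureReal_mono fun ω hω => Set.mem_iInter₂.mpr fun j _ => hω j
    _ = ∏ j ∈ G, μ.real {ω | a ⬝ᵥ Y j ω = 0} := by
        rw [measureReal_def, hY.measure_inter_preimage_eq_mul _ fun _ _ => .of_discrete,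
          ENNReal.toReal_prod]
        rfl
    _ ≤ ∏ _j ∈ G, B := Finset.prod_le_prod (fun _ _ => measureReal_nonneg) hB
    _ = B ^ #G := Finset.prod_const B

variable [Fintype κ] [DecidableEq ι] [DecidableEq F] {X : κ → Ω → ι → F} {T : κ → Finset ι} {B : ℝ}

lemma measureReal_forall_dotProduct_eq_zero_le_pow_card
    (hind : iIndepFun (fun q : ι × κ => fun ω => X q.2 ω q.1) μ)
    (hmeas : ∀ j i, Measurable fun ω => X j ω i)
    (hnear : ∀ j, ∀ i ∉ T j, ∀ k, μ.real {ω | X j ω i = k} ≤ B) (a : ι → F) :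
    μ.real {ω | ∀ j, a ⬝ᵥ X j ω = 0} ≤ B ^ #{j | ∃ i ∉ T j, a i ≠ 0} := by
  refine measureReal_forall_dotProduct_eq_zero_le (hind.curry fun q => hmeas q.2 q.1) a _ ?_
  intro j hj
  obtain ⟨i₀, hi₀T, hi₀⟩ := (Finset.mem_filter.mp hj).2
  have hcol : iIndepFun (fun i ω => X j ω i) μ := hind.precomp (Prod.mk_left_injective j)
  exact measureReal_dotProduct_eq_zero_le hcol (fun i => hmeas j i) hi₀ (hnear j i₀ hi₀T)

lemma measureReal_forall_dotProduct_eq_zero_le_of_ne_zero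
    (hind : iIndepFun (fun q : ι × κ => fun ω => X q.2 ω q.1) μ)
    (hmeas : ∀ j i, Measurable fun ω => X j ω i)
    (hnear : ∀ j, ∀ i ∉ T j, ∀ k, μ.real {ω | X j ω i = k} ≤ B) (hB0 : 0 ≤ B) (hB1 : B ≤ 1)
    {g : ℕ} (hT : ∀ i, g ≤ #{j | i ∉ T j}) {a : ι → F} (ha : a ≠ 0) :
    μ.real {ω | ∀ j, a ⬝ᵥ X j ω = 0} ≤ B ^ g := by
  obtain ⟨i₀, hi₀⟩ := Function.ne_iff.mp ha
  refine (measureReal_forall_dotProduct_eq_zero_le_pow_card hind hmeas hnear a).trans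
    (pow_le_pow_of_le_one hB0 hB1 ((hT i₀).trans (Finset.card_le_card ?_)))
  exact Finset.monotone_filter_right _ fun j _ hj => ⟨i₀, hj, hi₀⟩

lemma measureReal_forall_dotProduct_eq_zero_le_of_lt_card_support
    (hind : iIndepFun (fun q : ι × κ => fun ω => X q.2 ω q.1) μ)
    (hmeas : ∀ j i, Measurable fun ω => X j ω i)
    (hnear : ∀ j, ∀ i ∉ T j, ∀ k, μ.real {ω | X j ω i = k} ≤ B)
    {k : ℕ} (hT : ∀ j, #(T j) ≤ k) {a : ι → F} (ha : k < #{i | a i ≠ 0}) :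
    μ.real {ω | ∀ j, a ⬝ᵥ X j ω = 0} ≤ B ^ Fintype.card κ := by
  convert measureReal_forall_dotProduct_eq_zero_le_pow_card hind hmeas hnear a using 2
  refine congrArg Finset.card (Finset.filter_true_of_mem fun j _ => ?_) |>.symm
  by_contra! hsupp
  have hsub : ({i | a i ≠ 0} : Finset ι) ⊆ T j := fun i hi => by
    by_contra hiT
    exact (Finset.mem_filter.mp hi).2 (hsupp i hiT)
  exact ha.not_ge ((Finset.card_le_card hsub).trans (hT j))

theorem measureReal_exists_orthogonal_lt_le
    (hind : iIndepFun (fun q : ι × κ => fun ω => X q.2 ω q.1) μ)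
    (hmeas : ∀ j i, Measurable fun ω => X j ω i)
    (hnear : ∀ j, ∀ i ∉ T j, ∀ k, μ.real {ω | X j ω i = k} ≤ B) (hB0 : 0 ≤ B) (hB1 : B ≤ 1)
    {k g : ℕ} (hT_card : ∀ j, #(T j) ≤ k) (hT_mem : ∀ i, g ≤ #{j | i ∉ T j})
    {ρ : (ι → F) → ℝ} (hρ : ∀ a, 0 ≤ ρ a) {ε : ℝ} (hε : 0 < ε) :
    μ.real {ω | ∃ a ≠ 0, (∀ j, a ⬝ᵥ X j ω = 0) ∧ ε < ρ a} ≤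
      2 ^ Fintype.card ι * Fintype.card F ^ k * B ^ g + (∑ a, ρ a) / ε * B ^ Fintype.card κ := by
  set O : (ι → F) → Set Ω := fun a => {ω | ∀ j, a ⬝ᵥ X j ω = 0}
  set sparse : Finset (ι → F) := {a | a ≠ 0 ∧ #{i | a i ≠ 0} ≤ k}
  set spread : Finset (ι → F) := {a | k < #{i | a i ≠ 0} ∧ ε < ρ a}
  have hcover : {ω | ∃ a ≠ 0, (∀ j, a ⬝ᵥ X j ω = 0) ∧ ε < ρ a} ⊆
      (⋃ a ∈ sparse, O a) ∪ ⋃ a ∈ spread, O a := by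
    rintro ω ⟨a, ha, horth, hρa⟩
    rcases le_or_gt #{i | a i ≠ 0} k with hk | hk
    · exact Or.inl (Set.mem_biUnion (by simp [sparse, ha, hk]) horth)
    · exact Or.inr (Set.mem_biUnion (by simp [spread, hk, hρa]) horth)
  have hsparse : #sparse ≤ 2 ^ Fintype.card ι * Fintype.card F ^ k :=
    (Finset.card_le_card (Finset.monotone_filter_right _ fun a _ ha => ha.2)).trans
      (Fintype.card_filter_card_support_le k)
  have hspread : #spread * ε ≤ ∑ a, ρ a := by
    rw [← nsmul_eq_mul]
    exact (Finset.card_nsmul_le_sum _ _ _ fun a ha => (Finset.mem_filter.mp ha).2.2.le).trans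
      (Finset.sum_le_sum_of_subset_of_nonneg (Finset.subset_univ _) fun a _ _ => hρ a)
  calc μ.real {ω | ∃ a ≠ 0, (∀ j, a ⬝ᵥ X j ω = 0) ∧ ε < ρ a}
      ≤ ∑ a ∈ sparse, μ.real (O a) + ∑ a ∈ spread, μ.real (O a) :=
        (measureReal_mono hcover).trans <| (measureReal_union_le _ _).trans <|
          add_le_add (measureReal_biUnion_finset_le _ _) (measureReal_biUnion_finset_le _ _)
    _ ≤ #sparse * B ^ g + #spread * B ^ Fintype.card κ := by
        simp only [← nsmul_eq_mul]
        gcongr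
        · exact Finset.sum_le_card_nsmul _ _ _ fun a ha =>
            measureReal_forall_dotProduct_eq_zero_le_of_ne_zero hind hmeas hnear hB0 hB1 hT_mem
              (Finset.mem_filter.mp ha).2.1
        · exact Finset.sum_le_card_nsmul _ _ _ fun a ha =>
            measureReal_forall_dotProduct_eq_zero_le_of_lt_card_support hind hmeas hnear hT_card
              (Finset.mem_filter.mp ha).2.1
    _ ≤ 2 ^ Fintype.card ι * Fintype.card F ^ k * B ^ g + (∑ a, ρ a) / ε * B ^ Fintype.card κ := by
        gcongr
        · exact_mod_cast hsparse
        · rw [le_div_iff₀ hε]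
          exact hspread

end Orthogonal

end ProbabilityTheory

lemma two_mul_pow_le_four_pow {n : ℕ} (hn : 0 < n) : 2 * 2 ^ n ≤ (4 : ℝ) ^ n :=
  calc 2 * 2 ^ n ≤ (2 : ℝ) ^ n * 2 ^ n := by gcongr; exact le_self_pow₀ one_le_two hn.ne'
    _ = 4 ^ n := by rw [← mul_pow]; norm_num

lemma sparse_term_le {C q L : ℝ} {n k g : ℕ} (hC : 1 ≤ C) (hL : 1 ≤ L) (hn : 0 < n)
    (hk : q ^ k ≤ L) (hg : L ^ 6 ≤ q ^ g) (hgn : g ≤ n) :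
    2 ^ n * q ^ k * (C / q) ^ g ≤ (4 * C) ^ n / L / 2 := by
  calc 2 ^ n * q ^ k * (C / q) ^ g = 2 ^ n * q ^ k * C ^ g / q ^ g := by rw [div_pow]; ring
    _ ≤ 2 ^ n * L * C ^ n / L ^ 6 := by gcongr
    _ ≤ (4 * C) ^ n / L / 2 := by
        rw [div_div, div_le_div_iff₀ (by positivity) (by positivity)]
        calc 2 ^ n * L * C ^ n * (L * 2) = (2 * 2 ^ n) * C ^ n * L ^ 2 := by ring
          _ ≤ 4 ^ n * C ^ n * L ^ 6 := by
              gcongr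
              exacts [two_mul_pow_le_four_pow hn, by norm_num]
          _ = (4 * C) ^ n * L ^ 6 := by rw [mul_pow]

lemma spread_term_le {C q L M : ℝ} {n m : ℕ} (hC : 1 ≤ C) (hq : 0 < q) (hL : 0 < L) (hn : 0 < n)
    (hM : M ≤ √C ^ n * √q ^ n * L) (hm : √q ^ n * L ^ 3 ≤ q ^ m) (hmn : m ≤ n) :
    M / ((4 * C) ^ n / L) * (C / q) ^ m ≤ (4 * C) ^ n / L / 2 := by
  have hconst : 2 * (√C ^ n * C ^ m) ≤ (4 * C) ^ n * (4 * C) ^ n :=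
    calc 2 * (√C ^ n * C ^ m) = √C ^ n * (2 * C ^ m) := by ring
      _ ≤ (4 * C) ^ n * (2 * 2 ^ n * C ^ n) := by
          gcongr
          · exact (Real.sqrt_le_self_iff.mpr (Or.inr hC)).trans (by linarith)
          · exact le_mul_of_one_le_right zero_le_two (one_le_pow₀ one_le_two)
      _ ≤ (4 * C) ^ n * (4 * C) ^ n := by
          rw [mul_pow]
          gcongr
          exact two_mul_pow_le_four_pow hn
  rw [div_div_eq_mul_div, div_pow, div_mul_div_comm, div_div,
    div_le_div_iff₀ (by positivity) (by positivity)]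
  calc M * L * C ^ m * (L * 2) ≤ √C ^ n * √q ^ n * L * L * C ^ m * (L * 2) := by gcongr
    _ = 2 * (√C ^ n * C ^ m) * (√q ^ n * L ^ 3) := by ring
    _ ≤ (4 * C) ^ n * (4 * C) ^ n * q ^ m := mul_le_mul hconst hm (by positivity) (by positivity)
    _ = (4 * C) ^ n * ((4 * C) ^ n * q ^ m) := mul_assoc _ _ _

lemma rpow_one_div_rpow_mul_natCast {x α : ℝ} (hx : 0 ≤ x) (hα : α ≠ 0) (n : ℕ) :
    (x ^ (1 / α)) ^ (α * n) = x ^ n := by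
  rw [← Real.rpow_mul hx, show 1 / α * (α * n) = (n : ℝ) by field_simp, Real.rpow_natCast]

lemma failure_bound_le {C α q M : ℝ} {n m r s : ℕ} (hC : 1 ≤ C) (hα : 0 < α) (hα18 : α ≤ 1 / 18)
    (hn : 0 < n) (hm : (1 - 6 * α) * n ≤ m) (hmn : m ≤ n) (hq : (4 * C) ^ (1 / α) < q)
    (hM : M ≤ √(C * q) ^ r * q ^ s) (hr : r ≤ n) (hs : s ≤ α * n) :
    2 ^ n * q ^ ⌊α * n⌋₊ * (C / q) ^ ⌈6 * α * n⌉₊ +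
        M / ((4 * C) ^ (1 / α) / q) ^ (α * n) * (C / q) ^ m ≤
      ((4 * C) ^ (1 / α) / q) ^ (α * n) := by
  have h4C : 1 ≤ 4 * C := by linarith
  have hq1 : 1 ≤ q := (Real.one_le_rpow h4C (by positivity)).trans hq.le
  have hq0 : 0 < q := one_pos.trans_le hq1
  set L := q ^ (α * n)
  have hpow_le {k : ℕ} {x : ℝ} (h : k ≤ x) : q ^ k ≤ q ^ x := by
    simpa using Real.rpow_le_rpow_of_exponent_le hq1 h
  have hle_pow {k : ℕ} {x : ℝ} (h : x ≤ k) : q ^ x ≤ q ^ k := by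
    simpa using Real.rpow_le_rpow_of_exponent_le hq1 h
  have hε : ((4 * C) ^ (1 / α) / q) ^ (α * n) = (4 * C) ^ n / L := by
    rw [Real.div_rpow (by positivity) hq0.le, rpow_one_div_rpow_mul_natCast (by positivity) hα.ne']
  have hL : (4 * C) ^ n < L := by
    rw [← rpow_one_div_rpow_mul_natCast (by positivity) hα.ne']
    exact Real.rpow_lt_rpow (by positivity) hq (by positivity)
  have hL1 : 1 ≤ L := (one_le_pow₀ h4C).trans hL.le
  have hsqrt : √q ^ n * L ^ 3 = q ^ ((n : ℝ) / 2 + 3 * (α * n)) := by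
    rw [Real.sqrt_eq_rpow, ← Real.rpow_mul_natCast hq0.le, ← Real.rpow_mul_natCast hq0.le,
      ← Real.rpow_add hq0]
    ring_nf
  have hL6 : L ^ 6 = q ^ (6 * α * n) := by
    rw [← Real.rpow_mul_natCast hq0.le]
    ring_nf
  rw [hε]
  have hsparse := sparse_term_le (n := n) hC hL1 hn (hpow_le (Nat.floor_le (by positivity)))
    (hL6 ▸ hle_pow (Nat.le_ceil _)) (Nat.ceil_le.mpr (by nlinarith))
  have hspread := spread_term_le (M := M) (L := L) hC hq0 (by positivity) hn ?_ ?_ hmn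
  · linarith
  · calc M ≤ √(C * q) ^ r * q ^ s := hM
      _ ≤ √(C * q) ^ n * L := by
          gcongr
          · exact Real.one_le_sqrt.mpr (one_le_mul_of_one_le_of_one_le hC hq1)
          · exact hpow_le hs
      _ = √C ^ n * √q ^ n * L := by rw [Real.sqrt_mul (by linarith), mul_pow]
  · rw [hsqrt]
    apply hle_pow
    nlinarith

theorem measureReal_exists_orthogonal_lt_rho_le {C α : ℝ} (hC : 1 ≤ C) (hα : 0 < α)
    (hα18 : α ≤ 1 / 18) {p n m : ℕ} [Fact p.Prime] (hm : (1 - 6 * α) * n ≤ (m : ℝ)) (hmn : m < n)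
    {F : Type*} [Field F] [Fintype F] [DecidableEq F] [Algebra (ZMod p) F]
    [MeasurableSpace F] [MeasurableSingletonClass F] {Ω : Type*} [MeasureSpace Ω]
    [IsProbabilityMeasure (ℙ : Measure Ω)] {Fset : Fin n → Finset (Fin n)}
    (hFcard : ∀ i, (#(Fset i) : ℝ) < α * n)
    (hFmem : ∀ i : Fin n, (#{j | i ∈ Fset j} : ℝ) ≤ (1 - 12 * α) * n)
    {X : Fin (m + 1) → Ω → (Fin n → F)} (hXmeas : ∀ j i, Measurable fun ω => X j ω i)
    (hXind : iIndepFun (fun q : Fin n × Fin (m + 1) => fun ω => X q.2 ω q.1) ℙ)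
    (hXnear : ∀ j i, i ∉ Fset (Fin.castLE hmn j) → ∀ k,
      (ℙ : Measure Ω).real {ω | X j ω i = k} ≤ C / Fintype.card F)
    (hq : (4 * C) ^ (1 / α) < Fintype.card F) :
    (ℙ : Measure Ω).real {ω | ∃ a ≠ 0, (∀ j : Fin m, a ⬝ᵥ X j.castSucc ω = 0) ∧
      ((4 * C) ^ (1 / α) / Fintype.card F) ^ (α * n) <
        rho (traceChar p F) (fun i k => (ℙ : Measure Ω).real {ω | X (Fin.last m) ω i = k})
          (Fset ⟨m, hmn⟩) a} ≤ ((4 * C) ^ (1 / α) / Fintype.card F) ^ (α * n) := by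
  have hCq : C ≤ Fintype.card F := calc
    C ≤ 4 * C := by linarith
    _ ≤ (4 * C) ^ (1 / α) := Real.self_le_rpow_of_one_le (by linarith) (by
        rw [le_div_iff₀ hα]; linarith)
    _ ≤ Fintype.card F := hq.le
  have hq0 : (0 : ℝ) < Fintype.card F := by exact_mod_cast Fintype.card_pos
  refine (measureReal_exists_orthogonal_lt_le (X := fun j : Fin m => X j.castSucc)
    (T := fun j : Fin m => Fset (Fin.castLE hmn j.castSucc)) (k := ⌊α * n⌋₊) (g := ⌈6 * α * n⌉₊)
    (hXind.precomp (Function.injective_id.prodMap (Fin.castSucc_injective m)))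
    (fun j i => hXmeas _ i) (fun j i hi k => hXnear _ i hi k) (by positivity)
    ((div_le_one hq0).mpr hCq) (fun j => Nat.le_floor (hFcard _).le) (fun i => ?_)
    (rho_nonneg _ _ _) (by positivity)).trans ?_
  · -- `i` lies outside at least `m - (1 - 12α)n ≥ 6αn` of the first `m` types
    have := ((Fin.castLE_injective hmn).comp (Fin.castSucc_injective m)).card_le_card_filter_not_add
      (fun j => i ∈ Fset j)
    rw [Fintype.card_fin] at this
    refine Nat.ceil_le.mpr ?_
    have hcast : (m : ℝ) ≤
        #{j : Fin m | i ∉ Fset (Fin.castLE hmn j.castSucc)} + #{j | i ∈ Fset j} := by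
      exact_mod_cast this
    linarith [hFmem i]
  · rw [Fintype.card_fin, Fintype.card_fin]
    refine failure_bound_le hC hα hα18 (by omega) hm hmn.le hq
      (sum_rho_le (isPrimitive_traceChar p F) (fun _ _ _ => measureReal_nonneg)
        (fun i _ => sum_measureReal_setOf_eq_eq_one (hXmeas _ i))
        (fun i hi k => hXnear (Fin.last m) i hi k))
      ((Finset.card_le_univ _).trans_eq (Fintype.card_fin n)) (hFcard _).le

/-- **No structured normal vectors.** With probability at least `1 − (C'/q)^{cn}`, every nonzero
vector `a` orthogonal to the near uniform columns `X_1, …, X_m` (with `m ≥ (1−6α)n`) satisfies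
`ρ_{F_{m+1}}(a) ≤ (C'/q)^{cn}`, where `ρ` is defined through the characters
`f_i(t) = |E e_p(tr(x_i t))|` of the entries of `X_{m+1}`. -/
theorem near_uniform_no_structured_normal_vector
    (C : ℝ) (hC : 1 ≤ C) :
    ∃ α₀ > (0 : ℝ), ∀ α : ℝ, 0 < α → α ≤ α₀ →
    ∃ C' > (0 : ℝ), ∃ c > (0 : ℝ),
      ∀ (p n m : ℕ), p.Prime → (1 - 6 * α) * n ≤ (m : ℝ) → ∀ (hmn : m < n),
      ∀ (F : Type) [Field F] [Fintype F] [DecidableEq F] [CharP F p] [Algebra (ZMod p) F]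
        [MeasurableSpace F] [MeasurableSingletonClass F]
        (Ω : Type) [MeasureSpace Ω], IsProbabilityMeasure (ℙ : Measure Ω) →
      ∀ Fset : Fin n → Finset (Fin n),
        -- |F_i| < αn
        (∀ i, ((Fset i).card : ℝ) < α * n) →
        -- every index i lies in at most (1 − 12α)n of the sets F_j
        (∀ i : Fin n,
          (((Finset.univ.filter fun j => i ∈ Fset j).card : ℝ) ≤ (1 - 12 * α) * n)) →
      -- `X 0, …, X m` are the columns `X_1, …, X_{m+1}`
      ∀ X : Fin (m + 1) → Ω → (Fin n → F),
        (∀ (j : Fin (m + 1)) (i : Fin n), Measurable fun ω => X j ω i) →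
        -- all entries of all the vectors are (jointly) independent
        iIndepFun
          (fun q : Fin n × Fin (m + 1) => fun ω => X q.2 ω q.1) ℙ →
        -- X_j is a near uniform vector of type F_j
        (∀ (j : Fin (m + 1)) (i : Fin n), i ∉ Fset (Fin.castLE hmn j) → ∀ a : F,
          (ℙ {ω | X j ω i = a}).toReal ≤ C / (Fintype.card F : ℝ)) →
        1 - (C' / (Fintype.card F : ℝ)) ^ (c * n) ≤
          (ℙ {ω | ∀ a : Fin n → F, a ≠ 0 →
            (∀ j : Fin m, a ⬝ᵥ X (Fin.castSucc j) ω = 0) →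
            (Fintype.card F : ℝ)⁻¹ *
              ∑ t ∈ Finset.univ.erase (0 : F),
                ∏ i ∈ Finset.univ \ Fset ⟨m, hmn⟩,
                  ‖∑ k : F, ((ℙ {ω' | X (Fin.last m) ω' i = k}).toReal : ℂ) *
                    ep p (Algebra.trace (ZMod p) F (k * (t * a i)))‖ ≤
              (C' / (Fintype.card F : ℝ)) ^ (c * n)}).toReal := by
  refine ⟨1 / 18, by norm_num, fun α hα hα18 => ⟨(4 * C) ^ (1 / α), by positivity, α, hα, ?_⟩⟩
  intro p n m hp hm hmn F _ _ _ _ _ _ _ Ω _ _ Fset hFcard hFmem X hXmeas hXind hXnear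
  have : Fact p.Prime := ⟨hp⟩
  rcases le_or_gt (Fintype.card F : ℝ) ((4 * C) ^ (1 / α)) with hq | hq
  · have hε : 1 ≤ ((4 * C) ^ (1 / α) / Fintype.card F) ^ (α * n) :=
      Real.one_le_rpow ((one_le_div (by exact_mod_cast Fintype.card_pos)).mpr hq) (by positivity)
    exact (sub_nonpos.mpr hε).trans ENNReal.toReal_nonneg
  have hbad := measureReal_exists_orthogonal_lt_rho_le (p := p) hC hα hα18 hm hmn hFcard hFmem
    hXmeas hXind hXnear hq
  refine (sub_le_sub_left hbad 1).trans
    ((one_sub_measureReal_le_measureReal_compl _).trans (measureReal_mono ?_))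
  intro ω hω a ha horth
  by_contra hlt
  exact hω ⟨a, ha, horth, not_le.mp hlt⟩
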